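/- Let y = R·d and ŷ = R̂·d̂ with ‖d‖₂ = 1 and R, R̂ > 0. If the uncertainty score u = R̂·|‖d̂‖₂ − 1| satisfies u > |R̂ − R|·c for some c ≥ 1 where |R̂ − R| ≤ R̂‖d̂ − d‖₂/c, then ‖ŷ − y‖₂ ≥ u·(1 − 1/c); hence whenever the magnitude error is small relative to the directional error, large u forces a large prediction error. -/

import Mathlib

/-! Write `R̂ d̂ - R d = R̂ (d̂ - d) + (R̂ - R) d`. The reverse triangle inequality bounds the
prediction error below by `R̂ ‖d̂ - d‖ - |R̂ - R|`, the hypothesis on the magnitude error turns this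
into `R̂ ‖d̂ - d‖ (1 - 1/c)`, and `|‖d̂‖ - 1| ≤ ‖d̂ - d‖` because `d` is a unit vector. -/

lemma mul_norm_sub_sub_abs_le_norm_smul_sub_smul {E : Type*} [NormedAddCommGroup E]
    [NormedSpace ℝ E] {x d : E} (hd : ‖d‖ = 1) {a b : ℝ} (ha : 0 ≤ a) :
    a * ‖x - d‖ - |a - b| ≤ ‖a • x - b • d‖ := by
  have hsplit : a • (x - d) = (a • x - b • d) - (a - b) • d := by
    rw [smul_sub, sub_smul]; abel
  have := norm_sub_le (a • x - b • d) ((a - b) • d)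
  rw [← hsplit, norm_smul, norm_smul, hd, Real.norm_of_nonneg ha, Real.norm_eq_abs,
    mul_one] at this
  linarith

theorem stmt4_general (D : ℕ) (d dhat : EuclideanSpace ℝ (Fin D)) (R Rhat c : ℝ)
    (hd : ‖d‖ = 1) (hRhat : 0 < Rhat) (hc : 1 ≤ c)
    (heR : |Rhat - R| ≤ Rhat * ‖dhat - d‖ / c) :
    ‖Rhat • dhat - R • d‖ ≥ (Rhat * |‖dhat‖ - 1|) * (1 - 1 / c) := by
  have hdir : |‖dhat‖ - 1| ≤ ‖dhat - d‖ := hd ▸ abs_norm_sub_norm_le dhat d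
  have hc' : 0 ≤ 1 - 1 / c := sub_nonneg.mpr (div_le_one_of_le₀ hc (zero_le_one.trans hc))
  calc (Rhat * |‖dhat‖ - 1|) * (1 - 1 / c)
      ≤ Rhat * ‖dhat - d‖ * (1 - 1 / c) := by gcongr
    _ = Rhat * ‖dhat - d‖ - Rhat * ‖dhat - d‖ / c := by ring
    _ ≤ Rhat * ‖dhat - d‖ - |Rhat - R| := by linarith
    _ ≤ ‖Rhat • dhat - R • d‖ := mul_norm_sub_sub_abs_le_norm_smul_sub_smul hd hRhat.le

theorem stmt4 (D : ℕ) (d dhat : EuclideanSpace ℝ (Fin D)) (R Rhat c : ℝ)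
    (hd : ‖d‖ = 1) (hR : 0 < R) (hRhat : 0 < Rhat) (hc : 1 ≤ c)
    (hu : Rhat * |‖dhat‖ - 1| > |Rhat - R| * c)
    (heR : |Rhat - R| ≤ Rhat * ‖dhat - d‖ / c) :
    ‖Rhat • dhat - R • d‖ ≥ (Rhat * |‖dhat‖ - 1|) * (1 - 1 / c) :=
  stmt4_general D d dhat R Rhat c hd hRhat hc heR
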